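/- (Error bound with rotational alignment.) Let N be a positive integer, and for each i = 1,…,N let B_i ∈ ℝ^{d×r}, A_i ∈ ℝ^{r×d}, and let R_i ∈ ℝ^{r×r} be orthogonal. Define the aligned factors B̃_i = B_i R_i and Ã_i = R_iᵀ A_i, and the aligned aggregation error E_aligned = ((1/N)∑_i B̃_i)((1/N)∑_i Ã_i) − (1/N)∑_i B̃_i Ã_i. Fix references B_ref ∈ ℝ^{d×r}, A_ref ∈ ℝ^{r×d} and constants τ, κ, η, G_B ≥ 0, c₀ > 0, λ ∈ (0,1], δ_A > 0, and assume for every i: (i) ‖B_i‖_F ≤ √τ; (ii) relative alignment gain: (1/N)∑_i ‖Ã_i − A_ref‖_F² ≤ (1 − c₀λ)·(1/N)∑_i ‖A_i − A_ref‖_F²; (iii) ‖R_i − I‖_F ≤ 2κλ‖A_i − A_ref‖_F; (iv) ‖B_i − B_ref‖_F ≤ η G_B; (v) ‖A_i − A_ref‖_F ≥ δ_A. Then ‖E_aligned‖_F ≤ (1/N)∑_{i=1}^N ( ‖B̃_i − B_ref‖_F² + ‖Ã_i − A_ref‖_F² ) ≤ (1/N)∑_{i=1}^N ( ‖B_i −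 B_ref‖_F² + ‖A_i − A_ref‖_F² − Γ(λ)·‖A_i − A_ref‖_F² ), where Γ(λ) = (c₀ − 4√τ κ η G_B / δ_A)·λ − 4κ²λ²τ. -/

import Mathlib

open scoped BigOperators
open Matrix

/-- Frobenius norm of a real matrix. -/
noncomputable def frob {m n : Type*} [Fintype m] [Fintype n] (M : Matrix m n ℝ) : ℝ :=
  Real.sqrt (∑ i, ∑ j, (M i j) ^ 2)

/-!
The aggregation error of factor-wise averaging is unchanged when every `Bᵢ` is shifted by `B_ref`
and every `Aᵢ` by `A_ref`. For centred factors `Uᵢ, Vᵢ`, submultiplicativity, `ab ≤ (a² + b²)/2`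
and Jensen's `‖mean U‖² ≤ mean ‖U‖²` bound both `(mean U)(mean V)` and `mean (UV)` by half of
`mean (‖U‖² + ‖V‖²)`.

For the second inequality, `BᵢRᵢ - B_ref = (Bᵢ - B_ref) + Bᵢ(Rᵢ - 1)` gives
`‖BᵢRᵢ - B_ref‖ ≤ ‖Bᵢ - B_ref‖ + 2√τκλ‖Aᵢ - A_ref‖`; squaring, and using `‖Aᵢ - A_ref‖ ≥ δ_A`
to absorb the cross term, costs `(4√τκηG_B/δ_A)λ + 4κ²λ²τ` times `‖Aᵢ - A_ref‖²`, which the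
alignment gain `c₀λ` on the `A`-side pays for.
-/

open Finset
open scoped Matrix.Norms.Frobenius

lemma frob_eq_norm {m n : Type*} [Fintype m] [Fintype n] (M : Matrix m n ℝ) : frob M = ‖M‖ := by
  rw [frob, frobenius_norm_def, Real.sqrt_eq_rpow]
  simp [Real.norm_eq_abs, sq_abs]

lemma sq_norm_sum_smul_le {ι E : Type*} [SeminormedAddCommGroup E] [NormedSpace ℝ E]
    (s : Finset ι) {w : ι → ℝ} (hw₀ : ∀ i ∈ s, 0 ≤ w i) (hw₁ : ∑ i ∈ s, w i = 1) (x : ι → E) :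
    ‖∑ i ∈ s, w i • x i‖ ^ 2 ≤ ∑ i ∈ s, w i * ‖x i‖ ^ 2 := by
  have hcs : (∑ i ∈ s, w i * ‖x i‖) ^ 2 ≤ (∑ i ∈ s, w i) * ∑ i ∈ s, w i * ‖x i‖ ^ 2 :=
    sum_sq_le_sum_mul_sum_of_sq_le_mul s hw₀
      (fun i hi => mul_nonneg (hw₀ i hi) (sq_nonneg _)) (fun i _ => le_of_eq (by ring))
  calc ‖∑ i ∈ s, w i • x i‖ ^ 2 ≤ (∑ i ∈ s, w i * ‖x i‖) ^ 2 := by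
        gcongr
        refine (norm_sum_le _ _).trans (sum_le_sum fun i hi => ?_)
        rw [norm_smul, Real.norm_of_nonneg (hw₀ i hi)]
    _ ≤ ∑ i ∈ s, w i * ‖x i‖ ^ 2 := by rwa [hw₁, one_mul] at hcs

lemma sum_smul_sub_const {ι R M : Type*} [Ring R] [AddCommGroup M] [Module R M] {s : Finset ι}
    {w : ι → R} (hw : ∑ i ∈ s, w i = 1) (x : ι → M) (x₀ : M) :
    ∑ i ∈ s, w i • (x i - x₀) = ∑ i ∈ s, w i • x i - x₀ := by
  simp only [smul_sub, sum_sub_distrib, ← sum_smul, hw, one_smul]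

section AggregationError

variable {ι m n p : Type*} [Fintype ι] [Fintype n]

/-- The paper's `E_aligned` is the case of uniform weights `w i = 1 / N`. -/
noncomputable def aggregationError (w : ι → ℝ) (X : ι → Matrix m n ℝ) (Y : ι → Matrix n p ℝ) :
    Matrix m p ℝ :=
  (∑ i, w i • X i) * (∑ i, w i • Y i) - ∑ i, w i • (X i * Y i)

lemma aggregationError_sub_const {w : ι → ℝ} (hw : ∑ i, w i = 1) (X : ι → Matrix m n ℝ)
    (Y : ι → Matrix n p ℝ) (X₀ : Matrix m n ℝ) (Y₀ : Matrix n p ℝ) :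
    aggregationError w (fun i => X i - X₀) (fun i => Y i - Y₀) = aggregationError w X Y := by
  have hcross : ∑ i, w i • ((X i - X₀) * (Y i - Y₀))
      = ∑ i, w i • (X i * Y i) - (∑ i, w i • X i) * Y₀ - X₀ * (∑ i, w i • Y i) + X₀ * Y₀ := by
    simp only [Matrix.sub_mul, Matrix.mul_sub, smul_sub, sum_sub_distrib, Matrix.sum_mul,
      Matrix.mul_sum, Matrix.smul_mul, Matrix.mul_smul, ← sum_smul, hw, one_smul]
    abel
  rw [aggregationError, aggregationError, sum_smul_sub_const hw, sum_smul_sub_const hw, hcross]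
  simp only [Matrix.sub_mul, Matrix.mul_sub]
  abel

variable [Fintype m] [Fintype p] {w : ι → ℝ}

lemma norm_aggregationError_le (hw₀ : ∀ i, 0 ≤ w i) (hw₁ : ∑ i, w i = 1)
    (U : ι → Matrix m n ℝ) (V : ι → Matrix n p ℝ) :
    ‖aggregationError w U V‖ ≤ ∑ i, w i * (‖U i‖ ^ 2 + ‖V i‖ ^ 2) := by
  have hmean : ‖(∑ i, w i • U i) * (∑ i, w i • V i)‖
      ≤ (∑ i, w i * ‖U i‖ ^ 2 + ∑ i, w i * ‖V i‖ ^ 2) / 2 :=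
    calc _ ≤ ‖∑ i, w i • U i‖ * ‖∑ i, w i • V i‖ := frobenius_norm_mul _ _
      _ ≤ (‖∑ i, w i • U i‖ ^ 2 + ‖∑ i, w i • V i‖ ^ 2) / 2 := by
        linarith [two_mul_le_add_sq ‖∑ i, w i • U i‖ ‖∑ i, w i • V i‖]
      _ ≤ _ := by
        gcongr <;> exact sq_norm_sum_smul_le _ (fun i _ => hw₀ i) hw₁ _
  have hcross : ‖∑ i, w i • (U i * V i)‖ ≤ (∑ i, w i * ‖U i‖ ^ 2 + ∑ i, w i * ‖V i‖ ^ 2) / 2 :=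
    calc _ ≤ ∑ i, w i * (‖U i‖ * ‖V i‖) := by
          refine (norm_sum_le _ _).trans (sum_le_sum fun i _ => ?_)
          rw [norm_smul, Real.norm_of_nonneg (hw₀ i)]
          gcongr
          · exact hw₀ i
          · exact frobenius_norm_mul _ _
      _ ≤ ∑ i, w i * ((‖U i‖ ^ 2 + ‖V i‖ ^ 2) / 2) := by
          gcongr with i
          · exact hw₀ i
          · linarith [two_mul_le_add_sq ‖U i‖ ‖V i‖]
      _ = _ := by simp only [mul_add, add_div, sum_add_distrib, mul_div, sum_div]
  calc _ ≤ _ := norm_sub_le _ _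
    _ ≤ _ := add_le_add hmean hcross
    _ = _ := by simp only [mul_add, sum_add_distrib]; ring

lemma norm_aggregationError_le_sum_sq_dist (hw₀ : ∀ i, 0 ≤ w i) (hw₁ : ∑ i, w i = 1)
    (X : ι → Matrix m n ℝ) (Y : ι → Matrix n p ℝ) (X₀ : Matrix m n ℝ) (Y₀ : Matrix n p ℝ) :
    ‖aggregationError w X Y‖ ≤ ∑ i, w i * (‖X i - X₀‖ ^ 2 + ‖Y i - Y₀‖ ^ 2) := by
  rw [← aggregationError_sub_const hw₁ X Y X₀ Y₀]
  exact norm_aggregationError_le hw₀ hw₁ _ _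

end AggregationError

lemma norm_mul_sub_le {m n : Type*} [Fintype m] [Fintype n] [DecidableEq n]
    (B B₀ : Matrix m n ℝ) (R : Matrix n n ℝ) : ‖B * R - B₀‖ ≤ ‖B - B₀‖ + ‖B‖ * ‖R - 1‖ := by
  have hsplit : B * R - B₀ = (B - B₀) + B * (R - 1) := by
    rw [Matrix.mul_sub, Matrix.mul_one]
    abel
  rw [hsplit]
  exact (norm_add_le _ _).trans (add_le_add le_rfl (frobenius_norm_mul _ _))

/-- `δ ≤ D` turns the cross term `2 t u D` into a multiple of `D ^ 2`. -/
lemma sq_add_mul_le {u M t δ D : ℝ} (hu : 0 ≤ u) (huM : u ≤ M) (ht : 0 ≤ t) (hδ : 0 < δ)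
    (hδD : δ ≤ D) : (u + t * D) ^ 2 ≤ u ^ 2 + (2 * t * M / δ + t ^ 2) * D ^ 2 := by
  have hcross : u * D ≤ M * D ^ 2 / δ := by
    rw [le_div_iff₀ hδ]
    calc u * D * δ = u * δ * D := by ring
      _ ≤ M * D * D :=
        mul_le_mul_of_nonneg_right (mul_le_mul huM hδD hδ.le (hu.trans huM)) (hδ.le.trans hδD)
      _ = M * D ^ 2 := by ring
  calc (u + t * D) ^ 2 = u ^ 2 + 2 * t * (u * D) + t ^ 2 * D ^ 2 := by ring
    _ ≤ u ^ 2 + 2 * t * (M * D ^ 2 / δ) + t ^ 2 * D ^ 2 := by gcongr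
    _ = _ := by ring

lemma sq_norm_mul_sub_le {m n : Type*} [Fintype m] [Fintype n] [DecidableEq n]
    {B B₀ : Matrix m n ℝ} {R : Matrix n n ℝ} {s c M δ D : ℝ} (hB : ‖B‖ ≤ s) (hc : 0 ≤ c)
    (hR : ‖R - 1‖ ≤ c * D) (hBB₀ : ‖B - B₀‖ ≤ M) (hδ : 0 < δ) (hδD : δ ≤ D) :
    ‖B * R - B₀‖ ^ 2 ≤ ‖B - B₀‖ ^ 2 + (2 * (s * c) * M / δ + (s * c) ^ 2) * D ^ 2 := by
  have hs : 0 ≤ s := (norm_nonneg _).trans hB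
  calc ‖B * R - B₀‖ ^ 2 ≤ (‖B - B₀‖ + s * c * D) ^ 2 := by
        gcongr
        refine (norm_mul_sub_le B B₀ R).trans ?_
        rw [mul_assoc]
        gcongr
    _ ≤ _ := sq_add_mul_le (norm_nonneg _) hBB₀ (by positivity) hδ hδD

theorem error_bound_with_rotational_alignment_general (N d r : ℕ) (hN : 0 < N)
    (B : Fin N → Matrix (Fin d) (Fin r) ℝ) (A : Fin N → Matrix (Fin r) (Fin d) ℝ)
    (R : Fin N → Matrix (Fin r) (Fin r) ℝ)
    (Bref : Matrix (Fin d) (Fin r) ℝ) (Aref : Matrix (Fin r) (Fin d) ℝ)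
    (τ κ η GB c₀ lam δA : ℝ)
    (hτ : 0 ≤ τ) (hκ : 0 ≤ κ)
    (hlam0 : 0 < lam) (hδA : 0 < δA)
    (hB : ∀ i, frob (B i) ≤ Real.sqrt τ)
    (hgain : (N : ℝ)⁻¹ * ∑ i, frob ((R i)ᵀ * A i - Aref) ^ 2
      ≤ (1 - c₀ * lam) * ((N : ℝ)⁻¹ * ∑ i, frob (A i - Aref) ^ 2))
    (hRI : ∀ i, frob (R i - 1) ≤ 2 * κ * lam * frob (A i - Aref))
    (hBref : ∀ i, frob (B i - Bref) ≤ η * GB)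
    (hA : ∀ i, δA ≤ frob (A i - Aref)) :
    frob (((N : ℝ)⁻¹ • ∑ i, B i * R i) * ((N : ℝ)⁻¹ • ∑ i, (R i)ᵀ * A i)
          - (N : ℝ)⁻¹ • ∑ i, (B i * R i) * ((R i)ᵀ * A i))
        ≤ (N : ℝ)⁻¹ * ∑ i, (frob (B i * R i - Bref) ^ 2 + frob ((R i)ᵀ * A i - Aref) ^ 2)
      ∧ (N : ℝ)⁻¹ * ∑ i, (frob (B i * R i - Bref) ^ 2 + frob ((R i)ᵀ * A i - Aref) ^ 2)
        ≤ (N : ℝ)⁻¹ * ∑ i, (frob (B i - Bref) ^ 2 + frob (A i - Aref) ^ 2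
            - ((c₀ - 4 * Real.sqrt τ * κ * η * GB / δA) * lam - 4 * κ ^ 2 * lam ^ 2 * τ)
              * frob (A i - Aref) ^ 2) := by
  simp only [frob_eq_norm] at hB hgain hRI hBref hA ⊢
  have hw₀ : ∀ _ : Fin N, (0 : ℝ) ≤ (N : ℝ)⁻¹ := fun _ => by positivity
  have hw₁ : ∑ _ : Fin N, (N : ℝ)⁻¹ = 1 := by simp [hN.ne']
  refine ⟨?_, ?_⟩
  · simpa only [aggregationError, ← smul_sum, ← mul_sum] using
      norm_aggregationError_le_sum_sq_dist hw₀ hw₁ (fun i => B i * R i) (fun i => (R i)ᵀ * A i)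
        Bref Aref
  · have hBsum : (N : ℝ)⁻¹ * ∑ i, ‖B i * R i - Bref‖ ^ 2
        ≤ (N : ℝ)⁻¹ * ∑ i, (‖B i - Bref‖ ^ 2
          + (4 * Real.sqrt τ * κ * η * GB / δA * lam + 4 * κ ^ 2 * lam ^ 2 * τ)
            * ‖A i - Aref‖ ^ 2) := by
      gcongr with i
      refine (sq_norm_mul_sub_le (hB i) (by positivity) (hRI i) (hBref i) hδA (hA i)).trans_eq ?_
      rw [mul_pow, Real.sq_sqrt hτ]
      ring
    simp only [sum_add_distrib, sum_sub_distrib, ← mul_sum] at hBsum ⊢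
    linear_combination hBsum + hgain

/-- Error bound with rotational alignment: with aligned factors
`B̃ᵢ = BᵢRᵢ`, `Ãᵢ = RᵢᵀAᵢ` and aligned aggregation error
`E_aligned = ((1/N)∑ B̃ᵢ)((1/N)∑ Ãᵢ) − (1/N)∑ B̃ᵢÃᵢ`, under the alignment-gain,
rotation-dispersion, gradient-bound and drift assumptions,
`‖E_aligned‖_F ≤ (1/N)∑ (‖B̃ᵢ−B_ref‖² + ‖Ãᵢ−A_ref‖²)
             ≤ (1/N)∑ (‖Bᵢ−B_ref‖² + ‖Aᵢ−A_ref‖² − Γ(λ)‖Aᵢ−A_ref‖²)`,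
where `Γ(λ) = (c₀ − 4√τκηG_B/δ_A)λ − 4κ²λ²τ`. -/
theorem error_bound_with_rotational_alignment (N d r : ℕ) (hN : 0 < N)
    (B : Fin N → Matrix (Fin d) (Fin r) ℝ) (A : Fin N → Matrix (Fin r) (Fin d) ℝ)
    (R : Fin N → Matrix (Fin r) (Fin r) ℝ) (hR : ∀ i, (R i)ᵀ * R i = 1)
    (Bref : Matrix (Fin d) (Fin r) ℝ) (Aref : Matrix (Fin r) (Fin d) ℝ)
    (τ κ η GB c₀ lam δA : ℝ)
    (hτ : 0 ≤ τ) (hκ : 0 ≤ κ) (hη : 0 ≤ η) (hGB : 0 ≤ GB)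
    (hc₀ : 0 < c₀) (hlam0 : 0 < lam) (hlam1 : lam ≤ 1) (hδA : 0 < δA)
    (hB : ∀ i, frob (B i) ≤ Real.sqrt τ)
    (hgain : (N : ℝ)⁻¹ * ∑ i, frob ((R i)ᵀ * A i - Aref) ^ 2
      ≤ (1 - c₀ * lam) * ((N : ℝ)⁻¹ * ∑ i, frob (A i - Aref) ^ 2))
    (hRI : ∀ i, frob (R i - 1) ≤ 2 * κ * lam * frob (A i - Aref))
    (hBref : ∀ i, frob (B i - Bref) ≤ η * GB)
    (hA : ∀ i, δA ≤ frob (A i - Aref)) :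
    frob (((N : ℝ)⁻¹ • ∑ i, B i * R i) * ((N : ℝ)⁻¹ • ∑ i, (R i)ᵀ * A i)
          - (N : ℝ)⁻¹ • ∑ i, (B i * R i) * ((R i)ᵀ * A i))
        ≤ (N : ℝ)⁻¹ * ∑ i, (frob (B i * R i - Bref) ^ 2 + frob ((R i)ᵀ * A i - Aref) ^ 2)
      ∧ (N : ℝ)⁻¹ * ∑ i, (frob (B i * R i - Bref) ^ 2 + frob ((R i)ᵀ * A i - Aref) ^ 2)
        ≤ (N : ℝ)⁻¹ * ∑ i, (frob (B i - Bref) ^ 2 + frob (A i - Aref) ^ 2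
            - ((c₀ - 4 * Real.sqrt τ * κ * η * GB / δA) * lam - 4 * κ ^ 2 * lam ^ 2 * τ)
              * frob (A i - Aref) ^ 2) :=
  error_bound_with_rotational_alignment_general N d r hN B A R Bref Aref τ κ η GB c₀ lam δA hτ hκ
    hlam0 hδA hB hgain hRI hBref hA
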